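/- A tatami covering of the n×n grid contains at most n monominoes. -/

import Mathlib

open scoped Classical

/-- A cell `(i, j)` lies in row `i` and column `j`. -/
abbrev Cell : Type := ℤ × ℤ

/-- A tile: a monomino, a horizontal domino (covering `(i,j)` and `(i,j+1)`),
or a vertical domino (covering `(i,j)` and `(i+1,j)`), identified by its
top-left cell. -/
inductive Tile : Type where
  | mono : Cell → Tile
  | hdom : Cell → Tile
  | vdom : Cell → Tile
deriving DecidableEq

/-- The set of cells covered by a tile. -/
def Tile.cells : Tile → Finset Cell
  | .mono c => {c}
  | .hdom c => {c, (c.1, c.2 + 1)}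
  | .vdom c => {c, (c.1 + 1, c.2)}

def Tile.IsMono : Tile → Prop
  | .mono _ => True
  | _ => False

def Tile.IsHoriz : Tile → Prop
  | .hdom _ => True
  | _ => False

def Tile.IsVert : Tile → Prop
  | .vdom _ => True
  | _ => False

def Tile.IsDomino : Tile → Prop
  | .mono _ => False
  | _ => True

/-- The `r × c` grid of cells (r rows, c columns). -/
noncomputable def grid (r c : ℕ) : Finset Cell :=
  Finset.Ico (0 : ℤ) (r : ℤ) ×ˢ Finset.Ico (0 : ℤ) (c : ℤ)

/-- The four cells incident to the grid vertex `v` (the lattice point `v`,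
viewed as the common corner of these four cells). -/
def vtxCells (v : Cell) : Finset Cell :=
  {(v.1 - 1, v.2 - 1), (v.1 - 1, v.2), (v.1, v.2 - 1), v}

/-- Four pairwise distinct tiles of `T` meet at the grid vertex `v`:
the four cells incident to `v` are covered by four distinct tiles. -/
def FourMeet (T : Finset Tile) (v : Cell) : Prop :=
  ∃ t₁ ∈ T, ∃ t₂ ∈ T, ∃ t₃ ∈ T, ∃ t₄ ∈ T,
    (v.1 - 1, v.2 - 1) ∈ t₁.cells ∧ (v.1 - 1, v.2) ∈ t₂.cells ∧
    (v.1, v.2 - 1) ∈ t₃.cells ∧ v ∈ t₄.cells ∧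
    t₁ ≠ t₂ ∧ t₁ ≠ t₃ ∧ t₁ ≠ t₄ ∧ t₂ ≠ t₃ ∧ t₂ ≠ t₄ ∧ t₃ ≠ t₄

/-- `T` is a covering (partition into tiles) of the region `R`. -/
def IsCovering (T : Finset Tile) (R : Finset Cell) : Prop :=
  (∀ t₁ ∈ T, ∀ t₂ ∈ T, t₁ ≠ t₂ → Disjoint t₁.cells t₂.cells) ∧
  (∀ x : Cell, x ∈ R ↔ ∃ t ∈ T, x ∈ t.cells)

/-- `T` is a tatami covering of `R`: a covering in which no four tiles meet
at any grid vertex. -/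
def IsTatami (T : Finset Tile) (R : Finset Cell) : Prop :=
  IsCovering T R ∧ ∀ v : Cell, ¬ FourMeet T v

/-- The number of monominoes in `T`. -/
noncomputable def monoCount (T : Finset Tile) : ℕ :=
  (T.filter Tile.IsMono).card

/-- The number of vertical dominoes in `T`. -/
noncomputable def vertCount (T : Finset Tile) : ℕ :=
  (T.filter Tile.IsVert).card

/-- `v` is an interior grid vertex of the region `R`: all four incident
cells belong to `R`. -/
def InteriorVtx (R : Finset Cell) (v : Cell) : Prop :=
  (v.1 - 1, v.2 - 1) ∈ R ∧ (v.1 - 1, v.2) ∈ R ∧ (v.1, v.2 - 1) ∈ R ∧ v ∈ R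

/- ===================== auxiliary development ===================== -/

/-- Dual cell weight: `1 + 2·min(i, j, n-1-i, n-1-j)`. -/
noncomputable def wY (n : ℕ) (c : Cell) : ℕ :=
  (1 + 2 * min (min c.1 c.2) (min ((n : ℤ) - 1 - c.1) ((n : ℤ) - 1 - c.2))).toNat

/-- Dual vertex weight: `2·min(i, j, n-i, n-j)` (clamped at 0). -/
noncomputable def wZ (n : ℕ) (v : Cell) : ℕ :=
  (2 * min (min v.1 v.2) (min ((n : ℤ) - v.1) ((n : ℤ) - v.2))).toNat

/-- The (at most two) grid vertices crossed by a tile. -/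
def cross : Tile → Finset Cell
  | .mono _ => ∅
  | .hdom c => {(c.1, c.2 + 1), (c.1 + 1, c.2 + 1)}
  | .vdom c => {(c.1 + 1, c.2), (c.1 + 1, c.2 + 1)}

lemma mem_grid {n : ℕ} {x : Cell} :
    x ∈ grid n n ↔ 0 ≤ x.1 ∧ x.1 < n ∧ 0 ≤ x.2 ∧ x.2 < n := by
  simp [grid, Finset.mem_product, and_assoc]

/-- A tile covering a cell and the cell to its right is that horizontal domino. -/
lemma eq_hdom {t : Tile} {a : Cell} (h1 : a ∈ t.cells)
    (h2 : (a.1, a.2 + 1) ∈ t.cells) : t = .hdom a := by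
  obtain ⟨a1, a2⟩ := a
  cases t with
  | mono c =>
    simp [Tile.cells, Prod.ext_iff] at h1 h2; omega
  | hdom c =>
    obtain ⟨c1, c2⟩ := c
    simp only [Tile.cells, Finset.mem_insert, Finset.mem_singleton, Prod.ext_iff] at h1 h2
    have hc : c1 = a1 ∧ c2 = a2 := by omega
    simp [hc.1, hc.2]
  | vdom c =>
    obtain ⟨c1, c2⟩ := c
    simp [Tile.cells, Prod.ext_iff] at h1 h2; omega

/-- A tile covering a cell and the cell below it is that vertical domino. -/
lemma eq_vdom {t : Tile} {a : Cell} (h1 : a ∈ t.cells)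
    (h2 : (a.1 + 1, a.2) ∈ t.cells) : t = .vdom a := by
  obtain ⟨a1, a2⟩ := a
  cases t with
  | mono c =>
    simp [Tile.cells, Prod.ext_iff] at h1 h2; omega
  | hdom c =>
    obtain ⟨c1, c2⟩ := c
    simp [Tile.cells, Prod.ext_iff] at h1 h2; omega
  | vdom c =>
    obtain ⟨c1, c2⟩ := c
    simp only [Tile.cells, Finset.mem_insert, Finset.mem_singleton, Prod.ext_iff] at h1 h2
    have hc : c1 = a1 ∧ c2 = a2 := by omega
    simp [hc.1, hc.2]

/-- No tile covers two diagonally adjacent cells. -/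
lemma no_diag {t : Tile} {a : Cell} (h1 : a ∈ t.cells)
    (h2 : (a.1 + 1, a.2 + 1) ∈ t.cells) : False := by
  obtain ⟨a1, a2⟩ := a
  cases t with
  | mono c =>
    obtain ⟨c1, c2⟩ := c
    simp [Tile.cells, Prod.ext_iff] at h1 h2; omega
  | hdom c =>
    obtain ⟨c1, c2⟩ := c
    simp [Tile.cells, Prod.ext_iff] at h1 h2; omega
  | vdom c =>
    obtain ⟨c1, c2⟩ := c
    simp [Tile.cells, Prod.ext_iff] at h1 h2; omega

/-- No tile covers two anti-diagonally adjacent cells. -/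
lemma no_anti {t : Tile} {a : Cell} (h1 : a ∈ t.cells)
    (h2 : (a.1 + 1, a.2 - 1) ∈ t.cells) : False := by
  obtain ⟨a1, a2⟩ := a
  cases t with
  | mono c =>
    obtain ⟨c1, c2⟩ := c
    simp [Tile.cells, Prod.ext_iff] at h1 h2; omega
  | hdom c =>
    obtain ⟨c1, c2⟩ := c
    simp [Tile.cells, Prod.ext_iff] at h1 h2; omega
  | vdom c =>
    obtain ⟨c1, c2⟩ := c
    simp [Tile.cells, Prod.ext_iff] at h1 h2; omega

/-- In a tatami covering, every interior vertex is crossed by some tile. -/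
lemma crossed_of_interior {n : ℕ} {T : Finset Tile} (h : IsTatami T (grid n n))
    {v : Cell} (h1 : (1 : ℤ) ≤ v.1) (h2 : v.1 < n) (h3 : (1 : ℤ) ≤ v.2) (h4 : v.2 < n) :
    ∃ t ∈ T, v ∈ cross t := by
  obtain ⟨v1, v2⟩ := v
  simp only at h1 h2 h3 h4
  have hga : ((v1 - 1, v2 - 1) : Cell) ∈ grid n n := by rw [mem_grid] <;> simp <;> omega
  have hgb : ((v1 - 1, v2) : Cell) ∈ grid n n := by rw [mem_grid] <;> simp <;> omega
  have hgc : ((v1, v2 - 1) : Cell) ∈ grid n n := by rw [mem_grid] <;> simp <;> omega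
  have hgd : ((v1, v2) : Cell) ∈ grid n n := by rw [mem_grid] <;> simp <;> omega
  obtain ⟨ta, hta, ha⟩ := (h.1.2 _).mp hga
  obtain ⟨tb, htb, hb⟩ := (h.1.2 _).mp hgb
  obtain ⟨tc, htc, hc⟩ := (h.1.2 _).mp hgc
  obtain ⟨td, htd, hd⟩ := (h.1.2 _).mp hgd
  have hb' : (((v1 - 1 : ℤ), (v2 - 1 : ℤ)).1, ((v1 - 1 : ℤ), (v2 - 1 : ℤ)).2 + 1) ∈ tb.cells := by
    have he : (((v1 - 1 : ℤ), (v2 - 1 : ℤ)).1, ((v1 - 1 : ℤ), (v2 - 1 : ℤ)).2 + 1)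
        = ((v1 - 1 : ℤ), v2) := by simp [Prod.ext_iff] <;> omega
    rw [he]; exact hb
  have hc' : (((v1 - 1 : ℤ), (v2 - 1 : ℤ)).1 + 1, ((v1 - 1 : ℤ), (v2 - 1 : ℤ)).2) ∈ tc.cells := by
    have he : (((v1 - 1 : ℤ), (v2 - 1 : ℤ)).1 + 1, ((v1 - 1 : ℤ), (v2 - 1 : ℤ)).2)
        = ((v1 : ℤ), v2 - 1) := by simp [Prod.ext_iff] <;> omega
    rw [he]; exact hc
  have hd'' : (((v1 - 1 : ℤ), (v2 - 1 : ℤ)).1 + 1, ((v1 - 1 : ℤ), (v2 - 1 : ℤ)).2 + 1) ∈ td.cells := by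
    have he : (((v1 - 1 : ℤ), (v2 - 1 : ℤ)).1 + 1, ((v1 - 1 : ℤ), (v2 - 1 : ℤ)).2 + 1)
        = ((v1 : ℤ), v2) := by simp [Prod.ext_iff] <;> omega
    rw [he]; exact hd
  rcases eq_or_ne ta tb with e | e1
  · refine ⟨ta, hta, ?_⟩
    have ht : ta = .hdom (v1 - 1, v2 - 1) := eq_hdom ha (e ▸ hb')
    rw [ht]
    simp [cross, Prod.ext_iff] <;> omega
  rcases eq_or_ne ta tc with e | e2
  · refine ⟨ta, hta, ?_⟩
    have ht : ta = .vdom (v1 - 1, v2 - 1) := eq_vdom ha (e ▸ hc')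
    rw [ht]
    simp [cross, Prod.ext_iff] <;> omega
  rcases eq_or_ne ta td with e | e3
  · exact absurd (no_diag ha (e ▸ hd'')) (by simp)
  rcases eq_or_ne tb tc with e | e4
  · have hc'' : (((v1, v2 - 1) : Cell)) ∈ tb.cells := e ▸ hc
    have hanti : (((v1 - 1 : ℤ), (v2 : ℤ)).1 + 1, ((v1 - 1 : ℤ), (v2 : ℤ)).2 - 1) ∈ tb.cells := by
      have he : (((v1 - 1 : ℤ), (v2 : ℤ)).1 + 1, ((v1 - 1 : ℤ), (v2 : ℤ)).2 - 1)
          = ((v1 : ℤ), v2 - 1) := by simp [Prod.ext_iff] <;> omega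
      rw [he]; exact hc''
    exact absurd (no_anti hb hanti) (by simp)
  rcases eq_or_ne tb td with e | e5
  · refine ⟨tb, htb, ?_⟩
    have hd3 : (((v1 - 1 : ℤ), (v2 : ℤ)).1 + 1, ((v1 - 1 : ℤ), (v2 : ℤ)).2) ∈ tb.cells := by
      have he : (((v1 - 1 : ℤ), (v2 : ℤ)).1 + 1, ((v1 - 1 : ℤ), (v2 : ℤ)).2)
          = ((v1 : ℤ), v2) := by simp [Prod.ext_iff] <;> omega
      rw [he]; exact e ▸ hd
    have ht : tb = .vdom (v1 - 1, v2) := eq_vdom hb hd3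
    rw [ht]
    simp [cross, Prod.ext_iff] <;> omega
  rcases eq_or_ne tc td with e | e6
  · refine ⟨tc, htc, ?_⟩
    have hd3 : (((v1, v2 - 1) : Cell).1, ((v1, v2 - 1) : Cell).2 + 1) ∈ tc.cells := by
      have he : (((v1, v2 - 1) : Cell).1, ((v1, v2 - 1) : Cell).2 + 1) = ((v1 : ℤ), v2) := by
        simp [Prod.ext_iff] <;> omega
      rw [he]; exact e ▸ hd
    have ht : tc = .hdom (v1, v2 - 1) := eq_hdom hc hd3
    rw [ht]
    simp [cross, Prod.ext_iff] <;> omega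
  exact absurd ⟨ta, hta, tb, htb, tc, htc, td, htd, ha, hb, hc, hd,
    e1, e2, e3, e4, e5, e6⟩ (h.2 (v1, v2))

/-- The per-tile dual inequality. -/
lemma tile_ineq {n : ℕ} {t : Tile} (hsub : ∀ x ∈ t.cells, x ∈ grid n n) :
    (if t.IsMono then 1 else 0) + ∑ v ∈ cross t, wZ n v ≤ ∑ c ∈ t.cells, wY n c := by
  cases t with
  | mono c =>
    obtain ⟨i, j⟩ := c
    have hg := mem_grid.mp (hsub (i, j) (by simp [Tile.cells]))
    simp only at hg
    have hm : (Tile.mono (i, j)).IsMono := trivial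
    rw [if_pos hm]
    simp only [Tile.cells, cross, Finset.sum_empty, Finset.sum_singleton, wY]
    omega
  | hdom c =>
    obtain ⟨i, j⟩ := c
    have hg1 := mem_grid.mp (hsub (i, j) (by simp [Tile.cells]))
    have hg2 := mem_grid.mp (hsub (i, j + 1) (by simp [Tile.cells]))
    simp only at hg1 hg2
    rw [if_neg (by simp [Tile.IsMono] : ¬ ((Tile.hdom (i, j)).IsMono))]
    have hne1 : ((i, j) : Cell) ≠ (i, j + 1) := by simp [Prod.ext_iff]
    have hne2 : ((i, j + 1) : Cell) ≠ (i + 1, j + 1) := by simp [Prod.ext_iff]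
    simp only [Tile.cells, cross]
    rw [Finset.sum_pair hne1, Finset.sum_pair hne2]
    simp only [wY, wZ]
    omega
  | vdom c =>
    obtain ⟨i, j⟩ := c
    have hg1 := mem_grid.mp (hsub (i, j) (by simp [Tile.cells]))
    have hg2 := mem_grid.mp (hsub (i + 1, j) (by simp [Tile.cells]))
    simp only at hg1 hg2
    rw [if_neg (by simp [Tile.IsMono] : ¬ ((Tile.vdom (i, j)).IsMono))]
    have hne1 : ((i, j) : Cell) ≠ (i + 1, j) := by simp [Prod.ext_iff]
    have hne2 : ((i + 1, j) : Cell) ≠ (i + 1, j + 1) := by simp [Prod.ext_iff]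
    simp only [Tile.cells, cross]
    rw [Finset.sum_pair hne1, Finset.sum_pair hne2]
    simp only [wY, wZ]
    omega

/-- Sum over a biUnion is at most the double sum (ℕ). -/
lemma sum_biUnion_le' {α β : Type*} [DecidableEq β] (s : Finset α) (t : α → Finset β)
    (f : β → ℕ) : ∑ x ∈ s.biUnion t, f x ≤ ∑ a ∈ s, ∑ x ∈ t a, f x := by
  classical
  induction s using Finset.induction with
  | empty => simp
  | insert _ _ ha ih =>
    rename_i a s
    rw [Finset.biUnion_insert, Finset.sum_insert ha]
    have huie := Finset.sum_union_inter (s₁ := t a) (s₂ := s.biUnion t) (f := f)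
    omega

lemma gauss (m : ℕ) : (∑ i ∈ Finset.Ico (1 : ℤ) (m : ℤ), i) * 2 = (m : ℤ) * ((m : ℤ) - 1) := by
  induction m with
  | zero => simp
  | succ k ih =>
    rcases Nat.eq_zero_or_pos k with rfl | hk
    · push_cast
      simp
    · have hins : Finset.Ico (1 : ℤ) ((k : ℤ) + 1)
          = insert (k : ℤ) (Finset.Ico (1 : ℤ) (k : ℤ)) := by
        ext x
        simp only [Finset.mem_Ico, Finset.mem_insert]
        constructor
        · intro hx; omega
        · intro hx
          rcases hx with rfl | hx
          · constructor
            · omega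
            · omega
          · constructor
            · omega
            · omega
      push_cast
      rw [hins, Finset.sum_insert (by simp [Finset.mem_Ico])]
      linear_combination ih

lemma ite_sum (n : ℕ) (hn : 1 ≤ n) :
    ∑ p ∈ Finset.Ico (1 : ℤ) (n : ℤ) ×ˢ Finset.Ico (1 : ℤ) (n : ℤ),
      (if (n : ℤ) ≤ p.1 + p.2 then (1 : ℤ) else -1) = (n : ℤ) - 1 := by
  rw [Finset.sum_product]
  have hn' : (1 : ℤ) ≤ (n : ℤ) := by exact_mod_cast hn
  have inner : ∀ i ∈ Finset.Ico (1 : ℤ) (n : ℤ),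
      (∑ j ∈ Finset.Ico (1 : ℤ) (n : ℤ), (if (n : ℤ) ≤ i + j then (1 : ℤ) else -1))
        = 2 * i + (1 - (n : ℤ)) := by
    intro i hi
    simp only [Finset.mem_Ico] at hi
    rw [← Finset.Ico_union_Ico_eq_Ico (show (1 : ℤ) ≤ (n : ℤ) - i by omega)
        (show (n : ℤ) - i ≤ (n : ℤ) by omega),
      Finset.sum_union (Finset.Ico_disjoint_Ico_consecutive _ _ _)]
    have h1 : (∑ j ∈ Finset.Ico (1 : ℤ) ((n : ℤ) - i),
        (if (n : ℤ) ≤ i + j then (1 : ℤ) else -1)) = -((n : ℤ) - i - 1) := by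
      rw [Finset.sum_congr rfl (fun j hj => if_neg (by
        simp only [Finset.mem_Ico] at hj; omega))]
      rw [Finset.sum_const, Int.card_Ico, nsmul_eq_mul]
      have h : (((n : ℤ) - i - 1).toNat : ℤ) = (n : ℤ) - i - 1 := by omega
      rw [h]; ring
    have h2 : (∑ j ∈ Finset.Ico ((n : ℤ) - i) (n : ℤ),
        (if (n : ℤ) ≤ i + j then (1 : ℤ) else -1)) = i := by
      rw [Finset.sum_congr rfl (fun j hj => if_pos (by
        simp only [Finset.mem_Ico] at hj; omega))]
      rw [Finset.sum_const, Int.card_Ico, nsmul_eq_mul]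
      have h : (((n : ℤ) - ((n : ℤ) - i)).toNat : ℤ) = i := by omega
      rw [h]; ring
    rw [h1, h2]; ring
  rw [Finset.sum_congr rfl inner, Finset.sum_add_distrib, Finset.sum_const,
    Int.card_Ico, nsmul_eq_mul]
  have h2i : (∑ i ∈ Finset.Ico (1 : ℤ) (n : ℤ), 2 * i)
      = (∑ i ∈ Finset.Ico (1 : ℤ) (n : ℤ), i) * 2 := by
    rw [Finset.sum_mul]; exact Finset.sum_congr rfl (fun i _ => by ring)
  rw [h2i, gauss n]
  have h : (((n : ℤ) - 1).toNat : ℤ) = (n : ℤ) - 1 := by omega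
  rw [h]; ring

theorem monomino_count_le_n (n : ℕ) (T : Finset Tile)
    (h : IsTatami T (grid n n)) : monoCount T ≤ n := by
  classical
  obtain ⟨hcov, htat⟩ := h
  rcases Nat.eq_zero_or_pos n with rfl | hn
  · have hT : T = ∅ := by
      rw [Finset.eq_empty_iff_forall_notMem]
      intro t ht
      have hx : ∃ x, x ∈ t.cells := by
        cases t with
        | mono c => exact ⟨c, by simp [Tile.cells]⟩
        | hdom c => exact ⟨c, by simp [Tile.cells]⟩
        | vdom c => exact ⟨c, by simp [Tile.cells]⟩
      obtain ⟨x, hx⟩ := hx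
      have hg := (hcov.2 x).mpr ⟨t, ht, hx⟩
      rw [mem_grid] at hg
      omega
    simp [monoCount, hT]
  set V : Finset Cell := Finset.Ico (1 : ℤ) (n : ℤ) ×ˢ Finset.Ico (1 : ℤ) (n : ℤ) with hV
  have hsub : ∀ t ∈ T, ∀ x ∈ t.cells, x ∈ grid n n :=
    fun t ht x hx => (hcov.2 x).mpr ⟨t, ht, hx⟩
  have hbi : grid n n = T.biUnion Tile.cells := by
    ext x
    simp only [Finset.mem_biUnion]
    exact hcov.2 x
  have hdisj : (T : Set Tile).PairwiseDisjoint Tile.cells :=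
    fun t₁ h₁ t₂ h₂ hne => hcov.1 t₁ h₁ t₂ h₂ hne
  have hsumY : ∑ t ∈ T, ∑ c ∈ t.cells, wY n c = ∑ c ∈ grid n n, wY n c := by
    rw [hbi, Finset.sum_biUnion hdisj]
  have hkey : ∀ t ∈ T,
      (if t.IsMono then 1 else 0) + ∑ v ∈ cross t, wZ n v ≤ ∑ c ∈ t.cells, wY n c :=
    fun t ht => tile_ineq (hsub t ht)
  have hmain : monoCount T + ∑ t ∈ T, ∑ v ∈ cross t, wZ n v ≤ ∑ c ∈ grid n n, wY n c := by
    have h1 : monoCount T = ∑ t ∈ T, (if t.IsMono then 1 else 0) := by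
      rw [monoCount, Finset.card_filter]
    calc monoCount T + ∑ t ∈ T, ∑ v ∈ cross t, wZ n v
        = ∑ t ∈ T, ((if t.IsMono then 1 else 0) + ∑ v ∈ cross t, wZ n v) := by
          rw [h1, Finset.sum_add_distrib]
      _ ≤ ∑ t ∈ T, ∑ c ∈ t.cells, wY n c := Finset.sum_le_sum hkey
      _ = ∑ c ∈ grid n n, wY n c := hsumY
  have hVsub : V ⊆ T.biUnion cross := by
    intro v hv
    simp only [hV, Finset.mem_product, Finset.mem_Ico] at hv
    obtain ⟨t, ht, hvt⟩ := crossed_of_interior ⟨hcov, htat⟩ hv.1.1 hv.1.2 hv.2.1 hv.2.2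
    exact Finset.mem_biUnion.mpr ⟨t, ht, hvt⟩
  have hZbound : ∑ v ∈ V, wZ n v ≤ ∑ t ∈ T, ∑ v ∈ cross t, wZ n v :=
    le_trans (Finset.sum_le_sum_of_subset hVsub) (sum_biUnion_le' T cross (wZ n))
  have hVg : V ⊆ grid n n := by
    intro x hx
    simp only [hV, Finset.mem_product, Finset.mem_Ico] at hx
    rw [mem_grid]; omega
  have hedge : ∀ x ∈ grid n n \ V, wY n x = 1 := by
    intro x hx
    rw [Finset.mem_sdiff, mem_grid] at hx
    obtain ⟨hg, hnv⟩ := hx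
    simp only [hV, Finset.mem_product, Finset.mem_Ico, not_and_or, not_le, not_lt] at hnv
    simp only [wY]
    omega
  have hcard : (grid n n \ V).card = 2 * n - 1 := by
    rw [Finset.card_sdiff_of_subset hVg]
    simp only [grid, hV, Finset.card_product, Int.card_Ico]
    have h1 : ((n : ℤ) - 0).toNat = n := by omega
    have h2 : ((n : ℤ) - 1).toNat = n - 1 := by omega
    rw [h1, h2]
    cases n with
    | zero => omega
    | succ m =>
      have hr : (m + 1) * (m + 1) = m * m + 2 * m + 1 := by ring
      simp only [Nat.add_sub_cancel]
      omega
  have hsplit : ∑ c ∈ grid n n, wY n c = (2 * n - 1) + ∑ p ∈ V, wY n p := by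
    rw [← Finset.sum_sdiff hVg, Finset.sum_congr rfl hedge, Finset.sum_const, smul_eq_mul,
      mul_one, hcard]
  have hpoint : ∀ p ∈ V, ((wZ n p : ℤ) - (wY n p : ℤ))
      = (if (n : ℤ) ≤ p.1 + p.2 then (1 : ℤ) else -1) := by
    intro p hp
    simp only [hV, Finset.mem_product, Finset.mem_Ico] at hp
    simp only [wZ, wY]
    split_ifs with hle <;> omega
  have hZY : ((∑ v ∈ V, wZ n v : ℕ) : ℤ) = ((∑ p ∈ V, wY n p : ℕ) : ℤ) + (n : ℤ) - 1 := by
    have hs := ite_sum n hn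
    rw [← Finset.sum_congr rfl hpoint, Finset.sum_sub_distrib] at hs
    push_cast
    linarith [hs]
  omega
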